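/- If (u, v, ρ) with ρ = 1/√(q² + κ), q² = u² + v² > 0, satisfy the momentum balance equations ∂ₓ(ρuv) + ∂ᵧ(ρv²+p) = R₁ and ∂ₓ(ρu²+p) + ∂ᵧ(ρuv) = R₂ with p = -√(q²+κ), and all functions are C¹, then they satisfy the rotationality-continuity equations: ∂ₓv - ∂ᵧu = (1/(ρq²))(u(½ρ∂ᵧκ + R₁) - v(½ρ∂ₓκ + R₂)) and ∂ₓ(ρu) + ∂ᵧ(ρv) = (ρu/(2q²))∂ₓκ + (ρv/(2q²))∂ᵧκ + (v/q²)R₁ + (u/q²)R₂. -/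

import Mathlib

/-! Since `p = -√(q² + κ)` and `ρ = 1 / √(q² + κ)`, the chain rule gives
`∇p = -(ρ / 2) ∇(q² + κ)`, and the product rule turns the two momentum equations into polynomial
identities in the values and first partials of `u, v, κ, ρ`. Combining them,
`u R₁ - v R₂ = ρ q² (∂ₓv - ∂ᵧu) - (ρ / 2) (u ∂ᵧκ - v ∂ₓκ)` and
`v R₁ + u R₂ = q² (∂ₓ(ρu) + ∂ᵧ(ρv)) - (ρ / 2) (u ∂ₓκ + v ∂ᵧκ)`;
the derivatives of `ρ` cancel or stay in `∂ₓ(ρu) + ∂ᵧ(ρv)`, so no formula for them is needed. -/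

open Filter Topology

section
variable {E : Type*} [NormedAddCommGroup E] [NormedSpace ℝ E] {f : E → ℝ} {z : E}

theorem DifferentiableAt.one_div_sqrt (hf : DifferentiableAt ℝ f z) (hpos : 0 < f z) :
    DifferentiableAt ℝ (fun w => 1 / √(f w)) z := by
  simpa only [one_div] using (hf.sqrt hpos.ne').fun_inv (Real.sqrt_pos.2 hpos).ne'

theorem fderiv_neg_sqrt_apply (hf : DifferentiableAt ℝ f z) (hpos : 0 < f z) (d : E) :
    fderiv ℝ (fun w => -√(f w)) z d = -(1 / √(f z) / 2) * fderiv ℝ f z d := by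
  rw [fderiv_fun_neg, fderiv_sqrt hf hpos.ne']
  simp only [neg_apply, smul_apply, smul_eq_mul]
  ring

end

section
variable {ρ u v ρx ρy ux uy vx vy κx κy R₁ R₂ : ℝ}

theorem rotationality_of_momentum_balance (hρ : ρ ≠ 0) (hq : u ^ 2 + v ^ 2 ≠ 0)
    (h₁ : ρ * u * vx + v * (ρ * ux + u * ρx) +
      (ρ * (2 * v * vy) + v ^ 2 * ρy + -(ρ / 2) * (2 * u * uy + 2 * v * vy + κy)) = R₁)
    (h₂ : ρ * (2 * u * ux) + u ^ 2 * ρx + -(ρ / 2) * (2 * u * ux + 2 * v * vx + κx) +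
      (ρ * u * vy + v * (ρ * uy + u * ρy)) = R₂) :
    vx - uy = 1 / (ρ * (u ^ 2 + v ^ 2)) *
      (u * (1 / 2 * ρ * κy + R₁) - v * (1 / 2 * ρ * κx + R₂)) := by
  have key : ρ * (u ^ 2 + v ^ 2) * (vx - uy) =
      u * (1 / 2 * ρ * κy + R₁) - v * (1 / 2 * ρ * κx + R₂) := by
    rw [← h₁, ← h₂]
    ring
  rw [← key]
  field_simp

theorem continuity_of_momentum_balance (hq : u ^ 2 + v ^ 2 ≠ 0)
    (h₁ : ρ * u * vx + v * (ρ * ux + u * ρx) +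
      (ρ * (2 * v * vy) + v ^ 2 * ρy + -(ρ / 2) * (2 * u * uy + 2 * v * vy + κy)) = R₁)
    (h₂ : ρ * (2 * u * ux) + u ^ 2 * ρx + -(ρ / 2) * (2 * u * ux + 2 * v * vx + κx) +
      (ρ * u * vy + v * (ρ * uy + u * ρy)) = R₂) :
    ρ * ux + u * ρx + (ρ * vy + v * ρy) =
      1 / 2 * (ρ * u / (u ^ 2 + v ^ 2)) * κx + 1 / 2 * (ρ * v / (u ^ 2 + v ^ 2)) * κy +
        v / (u ^ 2 + v ^ 2) * R₁ + u / (u ^ 2 + v ^ 2) * R₂ := by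
  have key : (u ^ 2 + v ^ 2) * (ρ * ux + u * ρx + (ρ * vy + v * ρy)) =
      1 / 2 * ρ * (u * κx + v * κy) + v * R₁ + u * R₂ := by
    rw [← h₁, ← h₂]
    ring
  apply mul_left_cancel₀ hq
  rw [key]
  field_simp

end

theorem momentum_to_rotationality_continuity_general
    (Ω : Set (ℝ × ℝ)) (hΩ : IsOpen Ω)
    (u v κ R₁ R₂ : ℝ × ℝ → ℝ)
    (hu : ∀ z ∈ Ω, ContDiffAt ℝ 1 u z)
    (hv : ∀ z ∈ Ω, ContDiffAt ℝ 1 v z)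
    (hκ : ∀ z ∈ Ω, ContDiffAt ℝ 1 κ z)
    (hq : ∀ z ∈ Ω, 0 < (u z) ^ 2 + (v z) ^ 2)
    (hqκ : ∀ z ∈ Ω, 0 < (u z) ^ 2 + (v z) ^ 2 + κ z)
    (ρ p : ℝ × ℝ → ℝ)
    (hρ : ∀ z ∈ Ω, ρ z = 1 / Real.sqrt ((u z) ^ 2 + (v z) ^ 2 + κ z))
    (hp : ∀ z ∈ Ω, p z = -Real.sqrt ((u z) ^ 2 + (v z) ^ 2 + κ z))
    (hmom1 : ∀ z ∈ Ω,
      fderiv ℝ (fun w => ρ w * u w * v w) z (1, 0) +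
        fderiv ℝ (fun w => ρ w * (v w) ^ 2 + p w) z (0, 1) = R₁ z)
    (hmom2 : ∀ z ∈ Ω,
      fderiv ℝ (fun w => ρ w * (u w) ^ 2 + p w) z (1, 0) +
        fderiv ℝ (fun w => ρ w * u w * v w) z (0, 1) = R₂ z) :
    ∀ z ∈ Ω,
      (fderiv ℝ v z (1, 0) - fderiv ℝ u z (0, 1) =
        (1 / (ρ z * ((u z) ^ 2 + (v z) ^ 2))) *
          (u z * ((1 / 2) * ρ z * fderiv ℝ κ z (0, 1) + R₁ z) -
           v z * ((1 / 2) * ρ z * fderiv ℝ κ z (1, 0) + R₂ z))) ∧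
      (fderiv ℝ (fun w => ρ w * u w) z (1, 0) +
        fderiv ℝ (fun w => ρ w * v w) z (0, 1) =
        (1 / 2) * (ρ z * u z / ((u z) ^ 2 + (v z) ^ 2)) * fderiv ℝ κ z (1, 0) +
        (1 / 2) * (ρ z * v z / ((u z) ^ 2 + (v z) ^ 2)) * fderiv ℝ κ z (0, 1) +
        (v z / ((u z) ^ 2 + (v z) ^ 2)) * R₁ z +
        (u z / ((u z) ^ 2 + (v z) ^ 2)) * R₂ z) := by
  intro z hz
  have hu' := (hu z hz).differentiableAt one_ne_zero
  have hv' := (hv z hz).differentiableAt one_ne_zero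
  have hκ' := (hκ z hz).differentiableAt one_ne_zero
  have hS : DifferentiableAt ℝ (fun w => u w ^ 2 + v w ^ 2 + κ w) z := by fun_prop
  have hρ_eq : ρ =ᶠ[𝓝 z] fun w => 1 / √(u w ^ 2 + v w ^ 2 + κ w) :=
    eventually_of_mem (hΩ.mem_nhds hz) hρ
  have hp_eq : p =ᶠ[𝓝 z] fun w => -√(u w ^ 2 + v w ^ 2 + κ w) :=
    eventually_of_mem (hΩ.mem_nhds hz) hp
  have hρ' : DifferentiableAt ℝ ρ z := (hS.one_div_sqrt (hqκ z hz)).congr_of_eventuallyEq hρ_eq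
  have hp' : DifferentiableAt ℝ p z := (hS.sqrt (hqκ z hz).ne').neg.congr_of_eventuallyEq hp_eq
  have hp_grad (d : ℝ × ℝ) :
      fderiv ℝ p z d = -(ρ z / 2) * fderiv ℝ (fun w => u w ^ 2 + v w ^ 2 + κ w) z d := by
    rw [hp_eq.fderiv_eq, fderiv_neg_sqrt_apply hS (hqκ z hz), hρ z hz]
  have hρ0 : ρ z ≠ 0 := by
    rw [hρ z hz]
    exact one_div_ne_zero (Real.sqrt_pos.2 (hqκ z hz)).ne'
  have h₁ := hmom1 z hz
  have h₂ := hmom2 z hz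
  simp (disch := fun_prop) only [fderiv_fun_mul, fderiv_fun_pow, fderiv_fun_add, hp_grad,
    add_apply, smul_apply, smul_eq_mul, nsmul_eq_mul,
    Nat.cast_ofNat, Nat.add_one_sub_one, pow_one] at h₁ h₂ ⊢
  exact ⟨rotationality_of_momentum_balance hρ0 (hq z hz).ne' h₁ h₂,
    continuity_of_momentum_balance (hq z hz).ne' h₁ h₂⟩

/-- if (u, v, ρ) with ρ = 1/√(q²+κ), p = -√(q²+κ), satisfy the
momentum balance equations with right-hand sides R₁, R₂, then they satisfy
the rotationality-continuity equations. -/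
theorem momentum_to_rotationality_continuity
    (Ω : Set (ℝ × ℝ)) (hΩ : IsOpen Ω)
    (u v κ R₁ R₂ : ℝ × ℝ → ℝ)
    (hu : ∀ z ∈ Ω, ContDiffAt ℝ 1 u z)
    (hv : ∀ z ∈ Ω, ContDiffAt ℝ 1 v z)
    (hκ : ∀ z ∈ Ω, ContDiffAt ℝ 1 κ z)
    (hR₁ : ContinuousOn R₁ Ω) (hR₂ : ContinuousOn R₂ Ω)
    (hq : ∀ z ∈ Ω, 0 < (u z) ^ 2 + (v z) ^ 2)
    (hqκ : ∀ z ∈ Ω, 0 < (u z) ^ 2 + (v z) ^ 2 + κ z)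
    (ρ p : ℝ × ℝ → ℝ)
    (hρ : ∀ z ∈ Ω, ρ z = 1 / Real.sqrt ((u z) ^ 2 + (v z) ^ 2 + κ z))
    (hp : ∀ z ∈ Ω, p z = -Real.sqrt ((u z) ^ 2 + (v z) ^ 2 + κ z))
    (hmom1 : ∀ z ∈ Ω,
      fderiv ℝ (fun w => ρ w * u w * v w) z (1, 0) +
        fderiv ℝ (fun w => ρ w * (v w) ^ 2 + p w) z (0, 1) = R₁ z)
    (hmom2 : ∀ z ∈ Ω,
      fderiv ℝ (fun w => ρ w * (u w) ^ 2 + p w) z (1, 0) +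
        fderiv ℝ (fun w => ρ w * u w * v w) z (0, 1) = R₂ z) :
    ∀ z ∈ Ω,
      (fderiv ℝ v z (1, 0) - fderiv ℝ u z (0, 1) =
        (1 / (ρ z * ((u z) ^ 2 + (v z) ^ 2))) *
          (u z * ((1 / 2) * ρ z * fderiv ℝ κ z (0, 1) + R₁ z) -
           v z * ((1 / 2) * ρ z * fderiv ℝ κ z (1, 0) + R₂ z))) ∧
      (fderiv ℝ (fun w => ρ w * u w) z (1, 0) +
        fderiv ℝ (fun w => ρ w * v w) z (0, 1) =
        (1 / 2) * (ρ z * u z / ((u z) ^ 2 + (v z) ^ 2)) * fderiv ℝ κ z (1, 0) +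
        (1 / 2) * (ρ z * v z / ((u z) ^ 2 + (v z) ^ 2)) * fderiv ℝ κ z (0, 1) +
        (v z / ((u z) ^ 2 + (v z) ^ 2)) * R₁ z +
        (u z / ((u z) ^ 2 + (v z) ^ 2)) * R₂ z) :=
  momentum_to_rotationality_continuity_general Ω hΩ u v κ R₁ R₂ hu hv hκ hq hqκ ρ p hρ hp hmom1
    hmom2
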